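/- arXiv:2601.07505 — 2 statements merged into one kernel-verified Lean document; each statement's English description precedes it below -/
import Mathlib

section
/- Let (X,τ,d) be a pre-e.pm.t. space such that (X,τ) is compact. Then there exist a compact extended metric-topological space (X̌,τ̌,ď) (i.e. with (X̌,τ̌) compact) and a surjective continuous-short map c : (X,τ,d) → (X̌,τ̌,ď) such that for every extended metric-topological space (Y,τ_Y,d_Y) and every continuous-short map φ : (X,τ,d) → (Y,τ_Y,d_Y) there exists a unique continuous-short map φ̃ : (X̌,τ̌,ď) → (Y,τ_Y,d_Y) with φ̃ ∘ c = φ; moreover τ̌ is the quotient topology of τ under c. -/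
open scoped ENNReal

universe u v w

/-- An extended pseudodistance on `X`. -/
structure IsExtPseudoDist {X : Type*} (d : X → X → ℝ≥0∞) : Prop where
  refl : ∀ x, d x x = 0
  symm : ∀ x y, d x y = d y x
  triangle : ∀ x y z, d x y ≤ d x z + d z y

/-- An extended distance on `X`. -/
structure IsExtDist {X : Type*} (d : X → X → ℝ≥0∞) : Prop where
  eq_zero_iff : ∀ x y, d x y = 0 ↔ x = y
  symm : ∀ x y, d x y = d y x
  triangle : ∀ x y z, d x y ≤ d x z + d z y

/-- `LIP_{b,1}(X,τ,d)`: bounded `τ`-continuous functions `f : X → ℝ` with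
`|f x - f y| ≤ d x y`. -/
def Lip1 {X : Type*} (τ : TopologicalSpace X) (d : X → X → ℝ≥0∞) : Set (X → ℝ) :=
  {f | @Continuous X ℝ τ _ f ∧ (∃ C : ℝ, ∀ x, |f x| ≤ C) ∧
    ∀ x y, ENNReal.ofReal |f x - f y| ≤ d x y}

/-- `(X,τ,d)` is an extended metric-topological space. -/
def IsEMT {X : Type*} (τ : TopologicalSpace X) (d : X → X → ℝ≥0∞) : Prop :=
  IsExtDist d ∧
  τ = (⨅ f ∈ Lip1 τ d, TopologicalSpace.induced f inferInstance) ∧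
  (∀ x y, d x y = ⨆ f ∈ Lip1 τ d, ENNReal.ofReal |f x - f y|)

/-- A continuous-short map between (pre-)extended (pseudo)metric-topological spaces. -/
def ContinuousShort {X Y : Type*} (τX : TopologicalSpace X) (dX : X → X → ℝ≥0∞)
    (τY : TopologicalSpace Y) (dY : Y → Y → ℝ≥0∞) (φ : X → Y) : Prop :=
  @Continuous X Y τX τY φ ∧ ∀ x y, dY (φ x) (φ y) ≤ dX x y


/-! The functions of `LIP_{b,1}` induce a canonical extended pseudodistance `lipDist`, and every
continuous-short map into an e.m.t. space is short for it. Identifying the points it does not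
separate gives a quotient carrying `lipDist` as an extended distance and the quotient topology.
That topology is compact and finer than the initial topology of `LIP_{b,1}` of the quotient,
which is Hausdorff because the descended functions separate points; hence the two coincide. -/

section LipDist

variable {X : Type*} (τ : TopologicalSpace X) (d : X → X → ℝ≥0∞)

noncomputable def lipDist (x y : X) : ℝ≥0∞ :=
  ⨆ f ∈ Lip1 τ d, ENNReal.ofReal |f x - f y|

variable {τ d}

lemma ofReal_abs_sub_le_lipDist {f : X → ℝ} (hf : f ∈ Lip1 τ d) (x y : X) :
    ENNReal.ofReal |f x - f y| ≤ lipDist τ d x y :=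
  le_iSup₂ (f := fun f (_ : f ∈ Lip1 τ d) => ENNReal.ofReal |f x - f y|) f hf

variable (τ d)

lemma lipDist_comm (x y : X) : lipDist τ d x y = lipDist τ d y x := by
  simp only [lipDist, abs_sub_comm]

lemma lipDist_triangle (x y z : X) : lipDist τ d x y ≤ lipDist τ d x z + lipDist τ d z y := by
  refine iSup₂_le fun f hf => ?_
  calc ENNReal.ofReal |f x - f y|
      ≤ ENNReal.ofReal (|f x - f z| + |f z - f y|) :=
        ENNReal.ofReal_le_ofReal (abs_sub_le _ _ _)
    _ = ENNReal.ofReal |f x - f z| + ENNReal.ofReal |f z - f y| :=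
        ENNReal.ofReal_add (abs_nonneg _) (abs_nonneg _)
    _ ≤ lipDist τ d x z + lipDist τ d z y :=
        add_le_add (ofReal_abs_sub_le_lipDist hf x z) (ofReal_abs_sub_le_lipDist hf z y)

lemma lipDist_eq_zero_iff (x y : X) :
    lipDist τ d x y = 0 ↔ ∀ f ∈ Lip1 τ d, f x = f y := by
  simp [lipDist, sub_eq_zero]

lemma IsEMT.eq_lipDist (h : IsEMT τ d) (x y : X) : d x y = lipDist τ d x y :=
  h.2.2 x y

end LipDist

section ContinuousShort

variable {X Y : Type*} {τ : TopologicalSpace X} {d : X → X → ℝ≥0∞}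
  {τY : TopologicalSpace Y} {dY : Y → Y → ℝ≥0∞} {φ : X → Y}

lemma ContinuousShort.comp_mem_lip1 (hφ : ContinuousShort τ d τY dY φ) {h : Y → ℝ}
    (hh : h ∈ Lip1 τY dY) : h ∘ φ ∈ Lip1 τ d := by
  obtain ⟨hcont, ⟨C, hC⟩, hshort⟩ := hh
  exact ⟨hcont.comp hφ.1, ⟨C, fun x => hC (φ x)⟩,
    fun x y => (hshort (φ x) (φ y)).trans (hφ.2 x y)⟩

lemma ContinuousShort.le_lipDist (hY : IsEMT τY dY) (hφ : ContinuousShort τ d τY dY φ)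
    (x y : X) : dY (φ x) (φ y) ≤ lipDist τ d x y := by
  rw [hY.eq_lipDist]
  exact iSup₂_le fun h hh => ofReal_abs_sub_le_lipDist (hφ.comp_mem_lip1 hh) x y

end ContinuousShort

lemma TopologicalSpace.eq_of_le_of_compactSpace_of_t2Space {Z : Type*}
    {t t' : TopologicalSpace Z} (h : t ≤ t') [hc : @CompactSpace Z t] [ht : @T2Space Z t'] :
    t = t' := by
  have hemb := @Continuous.isClosedEmbedding Z Z t t' hc ht id (continuous_id_of_le h)
    Function.injective_id
  have hind := @Topology.IsClosedEmbedding.toIsEmbedding Z Z t t' id hemb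
  have hinduced := @Topology.IsEmbedding.toIsInducing Z Z t t' id hind
  exact (@Topology.IsInducing.eq_induced Z Z t t' id hinduced).trans (@induced_id Z t')

lemma t2Space_iInf_induced_of_separates {Z Y : Type*} [TopologicalSpace Y] [T2Space Y]
    (F : Set (Z → Y)) (hsep : ∀ z w : Z, z ≠ w → ∃ g ∈ F, g z ≠ g w) :
    @T2Space Z (⨅ g ∈ F, TopologicalSpace.induced g inferInstance) := by
  let _ : TopologicalSpace Z := ⨅ g ∈ F, TopologicalSpace.induced g inferInstance
  refine ⟨fun z w hzw => ?_⟩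
  obtain ⟨g, hg, hne⟩ := hsep z w hzw
  exact separated_by_continuous (continuous_iff_le_induced.mpr (iInf₂_le g hg)) hne

section

variable {X : Type*} (τ : TopologicalSpace X) (d : X → X → ℝ≥0∞)

def lipSetoid : Setoid X where
  r x y := ∀ f ∈ Lip1 τ d, f x = f y
  iseqv := ⟨fun _ _ _ => rfl, fun h f hf => (h f hf).symm,
    fun h₁ h₂ f hf => (h₁ f hf).trans (h₂ f hf)⟩

def LipQuotient : Type _ := Quotient (lipSetoid τ d)

namespace LipQuotient

def mk : X → LipQuotient τ d := Quotient.mk (lipSetoid τ d)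

lemma mk_surjective : Function.Surjective (mk τ d) :=
  Quotient.mk_surjective

abbrev topology : TopologicalSpace (LipQuotient τ d) := τ.coinduced (mk τ d)

noncomputable def dist : LipQuotient τ d → LipQuotient τ d → ℝ≥0∞ :=
  Quotient.lift₂ (lipDist τ d) fun _ _ _ _ h₁ h₂ =>
    iSup_congr fun f => iSup_congr fun hf => by rw [h₁ f hf, h₂ f hf]

lemma continuousShort_mk : ContinuousShort τ d (topology τ d) (dist τ d) (mk τ d) :=
  ⟨continuous_coinduced_rng, fun x y => iSup₂_le fun _ hf => hf.2.2 x y⟩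

lemma compactSpace [CompactSpace X] : @CompactSpace _ (topology τ d) :=
  @Function.Surjective.compactSpace _ _ τ (topology τ d) _ continuous_coinduced_rng _
    (mk_surjective τ d)

lemma isExtDist : IsExtDist (dist τ d) where
  eq_zero_iff z w := Quotient.inductionOn₂ z w fun x y =>
    (lipDist_eq_zero_iff τ d x y).trans ⟨fun h => Quotient.sound h, Quotient.exact⟩
  symm z w := Quotient.inductionOn₂ z w (lipDist_comm τ d)
  triangle z w v := Quotient.inductionOn₃ z w v (lipDist_triangle τ d)

variable {τ d}

noncomputable def liftLip1 {f : X → ℝ} (hf : f ∈ Lip1 τ d) : LipQuotient τ d → ℝ :=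
  Quotient.lift f fun _ _ h => h f hf

lemma liftLip1_mem {f : X → ℝ} (hf : f ∈ Lip1 τ d) :
    liftLip1 hf ∈ Lip1 (topology τ d) (dist τ d) := by
  obtain ⟨C, hC⟩ := hf.2.1
  exact ⟨continuous_coinduced_dom.mpr hf.1, ⟨C, Quotient.ind hC⟩,
    fun z w => Quotient.inductionOn₂ z w (ofReal_abs_sub_le_lipDist hf)⟩

variable (τ d)

lemma dist_eq_lipDist (z w : LipQuotient τ d) :
    dist τ d z w = lipDist (topology τ d) (dist τ d) z w := by
  induction z, w using Quotient.inductionOn₂ with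
  | h x y =>
    refine le_antisymm (iSup₂_le fun f hf => ?_) (iSup₂_le fun g hg => ?_)
    · exact ofReal_abs_sub_le_lipDist (liftLip1_mem hf) (mk τ d x) (mk τ d y)
    · exact ofReal_abs_sub_le_lipDist ((continuousShort_mk τ d).comp_mem_lip1 hg) x y

lemma exists_lip1_ne {z w : LipQuotient τ d} (hzw : z ≠ w) :
    ∃ g ∈ Lip1 (topology τ d) (dist τ d), g z ≠ g w := by
  induction z, w using Quotient.inductionOn₂ with
  | h x y =>
    obtain ⟨f, hf, hne⟩ : ∃ f ∈ Lip1 τ d, f x ≠ f y := by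
      by_contra! h
      exact hzw (Quotient.sound h)
    exact ⟨liftLip1 hf, liftLip1_mem hf, hne⟩

lemma isEMT [CompactSpace X] : IsEMT (topology τ d) (dist τ d) := by
  have := compactSpace τ d
  have hle : topology τ d ≤ ⨅ g ∈ Lip1 (topology τ d) (dist τ d),
      TopologicalSpace.induced g inferInstance :=
    le_iInf₂ fun g hg => continuous_iff_le_induced.mp hg.1
  have := t2Space_iInf_induced_of_separates _ fun z w => exists_lip1_ne τ d
  exact ⟨isExtDist τ d, TopologicalSpace.eq_of_le_of_compactSpace_of_t2Space hle,
    dist_eq_lipDist τ d⟩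

lemma existsUnique_lift {Y : Type*} {τY : TopologicalSpace Y} {dY : Y → Y → ℝ≥0∞}
    (hY : IsEMT τY dY) {φ : X → Y} (hφ : ContinuousShort τ d τY dY φ) :
    ∃! ψ : LipQuotient τ d → Y,
      ContinuousShort (topology τ d) (dist τ d) τY dY ψ ∧ ψ ∘ mk τ d = φ := by
  have hφ_const (x y : X) (hxy : lipSetoid τ d x y) : φ x = φ y := by
    refine (hY.1.eq_zero_iff _ _).mp (le_antisymm ?_ zero_le)
    exact (hφ.le_lipDist hY x y).trans_eq ((lipDist_eq_zero_iff τ d x y).mpr hxy)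
  refine ⟨Quotient.lift φ hφ_const, ⟨⟨continuous_coinduced_dom.mpr hφ.1,
    fun z w => Quotient.inductionOn₂ z w (hφ.le_lipDist hY)⟩, rfl⟩, ?_⟩
  rintro ψ ⟨-, hψ⟩
  exact (mk_surjective τ d).injective_comp_right hψ

end LipQuotient

end

theorem emt_fication_of_compact_general {X : Type u} (τ : TopologicalSpace X) (d : X → X → ℝ≥0∞)
    (hcpt : @CompactSpace X τ) :
    ∃ (Z : Type u) (τZ : TopologicalSpace Z) (dZ : Z → Z → ℝ≥0∞) (c : X → Z),
      IsEMT τZ dZ ∧ @CompactSpace Z τZ ∧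
      Function.Surjective c ∧ ContinuousShort τ d τZ dZ c ∧
      (∀ (Y : Type v) (τY : TopologicalSpace Y) (dY : Y → Y → ℝ≥0∞), IsEMT τY dY →
        ∀ φ : X → Y, ContinuousShort τ d τY dY φ →
          ∃! ψ : Z → Y, ContinuousShort τZ dZ τY dY ψ ∧ ψ ∘ c = φ) ∧
      τZ = TopologicalSpace.coinduced c τ :=
  ⟨LipQuotient τ d, LipQuotient.topology τ d, LipQuotient.dist τ d, LipQuotient.mk τ d,
    LipQuotient.isEMT τ d, LipQuotient.compactSpace τ d, LipQuotient.mk_surjective τ d,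
    LipQuotient.continuousShort_mk τ d,
    fun _ _ _ hY _ hφ => LipQuotient.existsUnique_lift τ d hY hφ, rfl⟩

/-- **E.m.t.-fication of a compact pre-e.pm.t. space.** If `(X,τ,d)` is a pre-e.pm.t. space
with `(X,τ)` compact, then there exist a compact e.m.t. space `(X̌,τ̌,ď)` and a surjective
continuous-short map `c : (X,τ,d) → (X̌,τ̌,ď)` such that every continuous-short map from
`(X,τ,d)` into an e.m.t. space factors uniquely through `c`; moreover `τ̌` is the quotient
topology of `τ` under `c`. -/
theorem emt_fication_of_compact {X : Type u} (τ : TopologicalSpace X) (d : X → X → ℝ≥0∞)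
    (hd : IsExtPseudoDist d) (hcpt : @CompactSpace X τ) :
    ∃ (Z : Type u) (τZ : TopologicalSpace Z) (dZ : Z → Z → ℝ≥0∞) (c : X → Z),
      IsEMT τZ dZ ∧ @CompactSpace Z τZ ∧
      Function.Surjective c ∧ ContinuousShort τ d τZ dZ c ∧
      (∀ (Y : Type v) (τY : TopologicalSpace Y) (dY : Y → Y → ℝ≥0∞), IsEMT τY dY →
        ∀ φ : X → Y, ContinuousShort τ d τY dY φ →
          ∃! ψ : Z → Y, ContinuousShort τZ dZ τY dY ψ ∧ ψ ∘ c = φ) ∧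
      τZ = TopologicalSpace.coinduced c τ :=
  emt_fication_of_compact_general τ d hcpt
end

section
/- Let (X,τ,d) be an extended metric-topological space and let x,y ∈ X satisfy d(x,y) < ∞. Then there exists f ∈ LIP_{b,1}(X,τ,d) such that f(x) − f(y) = d(x,y); in other words, the supremum in the τ-recovery property of d is attained for points at finite distance. -/
open scoped ENNReal

universe u v w

/-!
By recovery, for every `n` there is `g n ∈ LIP_{b,1}` with `g n y = 0` and
`g n x > d x y - εₙ`, where `εₙ = 2⁻ⁿ / 2`. A supremum of the `g n` would attain `d x y` but
need not be continuous. Instead, clamping each `g (n + 1)` between `F n` and `F n + εₙ`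
produces a sequence `F n ∈ LIP_{b,1}` that still satisfies `F n x ≥ d x y - εₙ` and moves by
at most `εₙ` at each step, so it converges uniformly. `LIP_{b,1}` is closed under `max`, `min`,
translation and uniform limits, so the limit lies in it and attains `d x y`.
-/

open Filter Topology

theorem tendsto_div_two_pow_atTop_nhds_zero (C : ℝ) :
    Tendsto (fun n : ℕ => C / 2 ^ n) atTop (𝓝 0) := by
  simpa [div_eq_mul_inv] using
    (tendsto_inv_atTop_zero.comp (tendsto_pow_atTop_atTop_of_one_lt one_lt_two)).const_mul C

theorem exists_tendstoUniformly_of_dist_le_geometric_two {α β : Type*} [PseudoMetricSpace β]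
    [CompleteSpace β] {F : ℕ → α → β} {C : ℝ}
    (hF : ∀ n z, dist (F n z) (F (n + 1) z) ≤ C / 2 / 2 ^ n) :
    ∃ f, TendstoUniformly F f atTop := by
  choose f hf using fun z => cauchySeq_tendsto_of_complete (cauchySeq_of_le_geometric_two (hF · z))
  refine ⟨f, Metric.tendstoUniformly_iff.2 fun δ hδ => ?_⟩
  filter_upwards [(tendsto_div_two_pow_atTop_nhds_zero C).eventually (gt_mem_nhds hδ)] with n hn z
  rw [dist_comm]
  exact (dist_le_of_le_geometric_two_of_tendsto (hF · z) (hf z) n).trans_lt hn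

namespace Lip1

variable {X : Type*} [τ : TopologicalSpace X] {d : X → X → ℝ≥0∞} {f g : X → ℝ}

theorem const_mem (c : ℝ) : (fun _ => c) ∈ Lip1 τ d :=
  ⟨continuous_const, ⟨|c|, fun _ => le_rfl⟩, fun _ _ => by simp⟩

theorem neg_mem (hf : f ∈ Lip1 τ d) : (fun z => -f z) ∈ Lip1 τ d := by
  obtain ⟨hcont, ⟨C, hC⟩, hlip⟩ := hf
  refine ⟨hcont.neg, ⟨C, fun z => by simpa using hC z⟩, fun z w => ?_⟩
  rw [← abs_neg, neg_sub_neg, neg_sub]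
  exact hlip z w

theorem add_const_mem (hf : f ∈ Lip1 τ d) (c : ℝ) : (fun z => f z + c) ∈ Lip1 τ d := by
  obtain ⟨hcont, ⟨C, hC⟩, hlip⟩ := hf
  refine ⟨hcont.add continuous_const, ⟨C + |c|, fun z => (abs_add_le _ _).trans ?_⟩,
    fun z w => ?_⟩
  · gcongr
    exact hC z
  · rw [add_sub_add_right_eq_sub]
    exact hlip z w

theorem sub_const_mem (hf : f ∈ Lip1 τ d) (c : ℝ) : (fun z => f z - c) ∈ Lip1 τ d := by
  simpa only [sub_eq_add_neg] using add_const_mem hf (-c)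

theorem max_mem (hf : f ∈ Lip1 τ d) (hg : g ∈ Lip1 τ d) :
    (fun z => max (f z) (g z)) ∈ Lip1 τ d := by
  obtain ⟨hfc, ⟨Cf, hCf⟩, hfl⟩ := hf
  obtain ⟨hgc, ⟨Cg, hCg⟩, hgl⟩ := hg
  refine ⟨hfc.max hgc, ⟨max Cf Cg, fun z => abs_max_le_max_abs_abs.trans ?_⟩, fun z w => ?_⟩
  · exact max_le_max (hCf z) (hCg z)
  · calc ENNReal.ofReal |max (f z) (g z) - max (f w) (g w)|
        ≤ ENNReal.ofReal (max |f z - f w| |g z - g w|) :=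
          ENNReal.ofReal_le_ofReal (abs_max_sub_max_le_max _ _ _ _)
      _ ≤ d z w := by
          rw [ENNReal.ofReal_max]
          exact max_le (hfl z w) (hgl z w)

theorem min_mem (hf : f ∈ Lip1 τ d) (hg : g ∈ Lip1 τ d) :
    (fun z => min (f z) (g z)) ∈ Lip1 τ d := by
  simpa only [max_neg_neg, neg_neg] using
    Lip1.neg_mem (Lip1.max_mem (Lip1.neg_mem hf) (Lip1.neg_mem hg))

theorem mem_of_tendstoUniformly {ι : Type*} {p : Filter ι} [p.NeBot] {F : ι → X → ℝ}
    (hF : ∀ i, F i ∈ Lip1 τ d) (hFf : TendstoUniformly F f p) : f ∈ Lip1 τ d := by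
  refine ⟨hFf.continuous (Frequently.of_forall fun i => (hF i).1), ?_, fun z w => ?_⟩
  · obtain ⟨i, hi⟩ := (Metric.tendstoUniformly_iff.1 hFf 1 one_pos).exists
    obtain ⟨C, hC⟩ := (hF i).2.1
    refine ⟨C + 1, fun z => ?_⟩
    have hclose : |f z - F i z| < 1 := hi z
    linarith [abs_sub_abs_le_abs_sub (f z) (F i z), hC z]
  · have hlim := ((hFf.tendsto_at z).sub (hFf.tendsto_at w)).abs
    exact le_of_tendsto' (ENNReal.tendsto_ofReal hlim) fun i => (hF i).2.2 z w

theorem sub_le_toReal (hf : f ∈ Lip1 τ d) {x y : X} (hxy : d x y ≠ ⊤) :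
    f x - f y ≤ (d x y).toReal :=
  (le_abs_self _).trans ((ENNReal.ofReal_le_iff_le_toReal hxy).1 (hf.2.2 x y))

end Lip1

theorem exists_mem_Lip1_lt_apply {X : Type*} [τ : TopologicalSpace X] {d : X → X → ℝ≥0∞}
    {x y : X} (hrec : d x y = ⨆ f ∈ Lip1 τ d, ENNReal.ofReal |f x - f y|) {r : ℝ}
    (hr : r < (d x y).toReal) : ∃ g ∈ Lip1 τ d, g y = 0 ∧ r < g x := by
  rcases lt_or_ge r 0 with hr0 | hr0
  · exact ⟨fun _ => 0, Lip1.const_mem 0, rfl, hr0⟩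
  have hxy : d x y ≠ ⊤ := fun htop => by
    rw [htop, ENNReal.toReal_top] at hr
    linarith
  have hlt : ENNReal.ofReal r < ⨆ f ∈ Lip1 τ d, ENNReal.ofReal |f x - f y| :=
    hrec ▸ (ENNReal.ofReal_lt_iff_lt_toReal hr0 hxy).2 hr
  obtain ⟨f, hf, hrf⟩ := lt_biSup_iff.1 hlt
  obtain ⟨f, hf, hrf⟩ : ∃ f ∈ Lip1 τ d, r < f x - f y := by
    rcases lt_abs.1 ((ENNReal.ofReal_lt_ofReal_iff_of_nonneg hr0).1 hrf) with h | h
    · exact ⟨f, hf, h⟩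
    · exact ⟨fun z => -f z, Lip1.neg_mem hf, by rwa [neg_sub_neg, ← neg_sub]⟩
  exact ⟨fun z => f z - f y, Lip1.sub_const_mem hf _, sub_self _, hrf⟩

section ClampSeq

variable {X : Type*} (G : ℕ → X → ℝ) (ε : ℕ → ℝ)

noncomputable def clampSeq : ℕ → X → ℝ
  | 0 => G 0
  | n + 1 => fun z => max (clampSeq n z) (min (G (n + 1) z) (clampSeq n z + ε n))

variable {G ε}

theorem clampSeq_mem_Lip1 [τ : TopologicalSpace X] {d : X → X → ℝ≥0∞}
    (hG : ∀ n, G n ∈ Lip1 τ d) : ∀ n, clampSeq G ε n ∈ Lip1 τ d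
  | 0 => hG 0
  | n + 1 =>
    Lip1.max_mem (clampSeq_mem_Lip1 hG n)
      (Lip1.min_mem (hG _) (Lip1.add_const_mem (clampSeq_mem_Lip1 hG n) _))

theorem clampSeq_apply_eq_zero {y : X} (hG : ∀ n, G n y = 0) : ∀ n, clampSeq G ε n y = 0
  | 0 => hG 0
  | n + 1 => by
    simp only [clampSeq, clampSeq_apply_eq_zero hG n, hG, zero_add]
    exact max_eq_left (min_le_left _ _)

theorem dist_clampSeq_succ_le {n : ℕ} (hε : 0 ≤ ε n) (z : X) :
    dist (clampSeq G ε n z) (clampSeq G ε (n + 1) z) ≤ ε n := by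
  simp only [clampSeq]
  rw [Real.dist_eq, abs_sub_comm, abs_of_nonneg (sub_nonneg.2 (le_max_left _ _))]
  have hstep := max_le (le_add_of_nonneg_right (a := clampSeq G ε n z) hε)
    (min_le_right (G (n + 1) z) _)
  linarith

theorem sub_le_clampSeq {x : X} {a : ℝ} (hε : ∀ n, 0 ≤ ε n) (hG : ∀ n, a - ε n ≤ G n x) :
    ∀ n, a - ε n ≤ clampSeq G ε n x
  | 0 => hG 0
  | n + 1 =>
    le_max_of_le_right (le_min (hG _) (by linarith [sub_le_clampSeq hε hG n, hε (n + 1)]))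

end ClampSeq

/-- In an e.m.t. space `(X,τ,d)`, for any two points `x,y` at finite distance the supremum
in the `τ`-recovery property of `d` is attained: there is `f ∈ LIP_{b,1}(X,τ,d)` with
`f x - f y = d x y`. -/
theorem emt_recovery_attained {X : Type u} (τ : TopologicalSpace X) (d : X → X → ℝ≥0∞)
    (h : IsEMT τ d) (x y : X) (hxy : d x y < ⊤) :
    ∃ f ∈ Lip1 τ d, f x - f y = (d x y).toReal := by
  set ε : ℕ → ℝ := fun n => 1 / 2 / 2 ^ n
  have hε : ∀ n, 0 < ε n := fun n => by positivity
  choose G hG hGy hGx using fun n =>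
    exists_mem_Lip1_lt_apply (h.2.2 x y) (sub_lt_self (d x y).toReal (hε n))
  obtain ⟨f, hFf⟩ := exists_tendstoUniformly_of_dist_le_geometric_two (C := 1) fun n z =>
    dist_clampSeq_succ_le (G := G) (hε n).le z
  have hf : f ∈ Lip1 τ d := Lip1.mem_of_tendstoUniformly (clampSeq_mem_Lip1 hG) hFf
  have hfy : f y = 0 :=
    tendsto_nhds_unique (hFf.tendsto_at y) <| by
      simp only [clampSeq_apply_eq_zero hGy]
      exact tendsto_const_nhds
  have hfx : (d x y).toReal ≤ f x := by
    refine le_of_tendsto_of_tendsto ?_ (hFf.tendsto_at x)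
      (Eventually.of_forall (sub_le_clampSeq (fun n => (hε n).le) fun n => (hGx n).le))
    simpa only [sub_zero] using
      tendsto_const_nhds.sub (tendsto_div_two_pow_atTop_nhds_zero (1 / 2))
  exact ⟨f, hf, le_antisymm (Lip1.sub_le_toReal hf hxy.ne) (by rwa [hfy, sub_zero])⟩
end
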